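/- Let N ≥ 1 and let a : ℤ → ℂ. Define s(x) = ∑_{k=1}^{N} a k * exp(i k x) and t(x) = ∑_{k=1}^{N} a (-k) * exp(-i k x). If the (N+1)×(N+1) Toeplitz matrix T with entries T j k = a (j - k) is normal (T * Tᴴ = Tᴴ * T), then for all real x and y: s(x) * conj(s(y)) - conj(t(x)) * t(y) + conj(s(x)) * s(y) * exp(i (N+1) (x - y)) - t(x) * conj(t(y)) * exp(i (N+1) (x - y)) = 0. -/

import Mathlib

open Matrix Finset Complex ComplexConjugate

/-!
Since `Tᴴ` is again a Toeplitz matrix, generated by `m ↦ conj (a (-m))`, both `T Tᴴ` and `Tᴴ T`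
have entries of the form `∑ₘ b (p - m) * conj (b (q - m))`. Subtracting the entries at `(j, k)`
and `(j - 1, k - 1)`, the sums telescope, and normality leaves, for `1 ≤ j, k ≤ N`,
`a j ā k - a (j-N-1) ā (k-N-1) = ā (-j) a (-k) - ā (N+1-j) a (N+1-k)`.
Each of the four products in the claim is a double sum `∑ⱼ ∑ₖ cⱼ c̄ₖ e^{ijx} e^{-iky}` over
`1 ≤ j, k ≤ N`; for the last two this needs the reflection `k ↦ N + 1 - k`, which absorbs the
factor `e^{i(N+1)(x-y)}`. Their coefficients then cancel by the identity above.
-/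

def toeplitz {R : Type*} (a : ℤ → R) (n : ℕ) : Matrix (Fin n) (Fin n) R :=
  of fun i j => a (i - j)

section Toeplitz

variable {R : Type*} [CommRing R] [StarRing R]

theorem conjTranspose_toeplitz (a : ℤ → R) (n : ℕ) :
    (toeplitz a n)ᴴ = toeplitz (fun m => star (a (-m))) n := by
  ext i j
  simp [toeplitz, neg_sub]

theorem toeplitz_mul_conjTranspose_apply (a : ℤ → R) {n : ℕ} (i j : Fin n) :
    (toeplitz a n * (toeplitz a n)ᴴ) i j = ∑ m ∈ range n, a (i - m) * star (a (j - m)) := by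
  simp [toeplitz, mul_apply, ← Fin.sum_univ_eq_sum_range (fun m => a (i - m) * star (a (j - m)))]

theorem sum_range_mul_star_sub_sum_range_mul_star (a : ℤ → R) (n : ℕ) (p q : ℤ) :
    ∑ m ∈ range n, a (p - m) * star (a (q - m))
      - ∑ m ∈ range n, a (p - 1 - m) * star (a (q - 1 - m))
      = a p * star (a q) - a (p - n) * star (a (q - n)) := by
  rw [← sum_sub_distrib]
  convert sum_range_sub' (fun m : ℕ => a (p - m) * star (a (q - m))) n using 3 <;>
    push_cast <;> ring_nf

theorem toeplitz_normal_coeff_identity {a : ℤ → R} {n : ℕ}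
    (hnormal : toeplitz a n * (toeplitz a n)ᴴ = (toeplitz a n)ᴴ * toeplitz a n)
    {j k : ℕ} (hj : 1 ≤ j) (hjn : j < n) (hk : 1 ≤ k) (hkn : k < n) :
    a j * star (a k) - a (j - n) * star (a (k - n))
      = star (a (-j)) * a (-k) - star (a (n - j)) * a (n - k) := by
  set b : ℤ → R := fun m => star (a (-m))
  have hb_conj : (toeplitz b n)ᴴ = toeplitz a n := by
    rw [← conjTranspose_toeplitz, conjTranspose_conjTranspose]
  have hgram : toeplitz a n * (toeplitz a n)ᴴ = toeplitz b n * (toeplitz b n)ᴴ := by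
    rw [hnormal, hb_conj, conjTranspose_toeplitz]
  have entry (i l : Fin n) := by
    simpa only [toeplitz_mul_conjTranspose_apply] using congrFun (congrFun hgram i) l
  have h₁ := entry ⟨j, hjn⟩ ⟨k, hkn⟩
  have h₀ := entry ⟨j - 1, by omega⟩ ⟨k - 1, by omega⟩
  simp only [Nat.cast_sub hj, Nat.cast_sub hk, Nat.cast_one] at h₀
  have ha_shift := sum_range_mul_star_sub_sum_range_mul_star a n j k
  have hb_shift := sum_range_mul_star_sub_sum_range_mul_star b n j k
  simp only [b, star_star, neg_sub] at hb_shift h₀ h₁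
  linear_combination -ha_shift + hb_shift + h₁ - h₀

end Toeplitz

noncomputable def trigPoly (c : ℤ → ℂ) (N : ℕ) (x : ℝ) : ℂ :=
  ∑ k ∈ Icc 1 N, c k * exp (I * k * x)

theorem conj_exp_I_mul_mul {w : ℂ} (hw : conj w = w) (x : ℝ) :
    conj (exp (I * w * x)) = exp (-(I * w * x)) := by
  rw [← exp_conj]
  simp [hw]

theorem sum_Icc_one_reflect {M : Type*} [AddCommMonoid M] (f : ℕ → M) (N : ℕ) :
    ∑ k ∈ Icc 1 N, f (N + 1 - k) = ∑ k ∈ Icc 1 N, f k := by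
  rw [← Ico_add_one_right_eq_Icc, sum_Ico_reflect _ _ le_self_add]
  simp

theorem conj_trigPoly (c : ℤ → ℂ) (N : ℕ) (x : ℝ) :
    conj (trigPoly c N x) = ∑ k ∈ Icc 1 N, conj (c k) * exp (-(I * k * x)) := by
  simp [trigPoly, conj_exp_I_mul_mul]

theorem sum_mul_exp_neg_mul_exp (c : ℤ → ℂ) (N : ℕ) (x : ℝ) :
    (∑ k ∈ Icc 1 N, c k * exp (-(I * k * x))) * exp (I * (N + 1) * x)
      = trigPoly (fun k => c (N + 1 - k)) N x := by
  rw [trigPoly, ← sum_Icc_one_reflect, sum_mul]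
  refine sum_congr rfl fun k hk => ?_
  have hkN : k ≤ N + 1 := by grind
  rw [mul_assoc, ← exp_add]
  push_cast [hkN]
  ring_nf

theorem trigPoly_mul_conj_trigPoly (c : ℤ → ℂ) (N : ℕ) (x y : ℝ) :
    trigPoly c N x * conj (trigPoly c N y)
      = ∑ j ∈ Icc 1 N, ∑ k ∈ Icc 1 N,
          c j * conj (c k) * (exp (I * j * x) * exp (-(I * k * y))) := by
  rw [conj_trigPoly, trigPoly, sum_mul_sum]
  refine sum_congr rfl fun j _ => sum_congr rfl fun k _ => ?_
  ring

theorem normal_toeplitz_trig_identity_general (N : ℕ) (a : ℤ → ℂ)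
    (s t : ℝ → ℂ)
    (hs : ∀ x : ℝ, s x = ∑ k ∈ Finset.Icc 1 N, a (k : ℤ) * Complex.exp (Complex.I * (k : ℂ) * (x : ℂ)))
    (ht : ∀ x : ℝ, t x = ∑ k ∈ Finset.Icc 1 N, a (-(k : ℤ)) * Complex.exp (-(Complex.I * (k : ℂ) * (x : ℂ))))
    (T : Matrix (Fin (N + 1)) (Fin (N + 1)) ℂ)
    (hT : ∀ j k : Fin (N + 1), T j k = a ((j : ℤ) - (k : ℤ)))
    (hnormal : T * Tᴴ = Tᴴ * T) :
    ∀ x y : ℝ,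
      s x * (starRingEnd ℂ) (s y) - (starRingEnd ℂ) (t x) * t y
        + (starRingEnd ℂ) (s x) * s y * Complex.exp (Complex.I * ((N : ℂ) + 1) * ((x : ℂ) - (y : ℂ)))
        - t x * (starRingEnd ℂ) (t y) * Complex.exp (Complex.I * ((N : ℂ) + 1) * ((x : ℂ) - (y : ℂ))) = 0 := by
  obtain rfl : T = toeplitz a (N + 1) := Matrix.ext hT
  intro x y
  set b : ℤ → ℂ := fun k => conj (a (-k))
  have hs₀ : s = trigPoly a N := funext hs
  have ht₀ (u : ℝ) : t u = conj (trigPoly b N u) := by simp [b, conj_trigPoly, ht]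
  have hr (u : ℝ) : conj (trigPoly a N u) * exp (I * (N + 1) * u)
      = trigPoly (fun k => conj (a (N + 1 - k))) N u := by
    rw [conj_trigPoly]
    exact sum_mul_exp_neg_mul_exp (fun k => conj (a k)) N u
  have hu (u : ℝ) : conj (trigPoly b N u) * exp (I * (N + 1) * u)
      = trigPoly (fun k => a (k - (N + 1))) N u := by
    simp only [b, conj_trigPoly, conj_conj]
    simpa only [neg_sub] using sum_mul_exp_neg_mul_exp (fun k => a (-k)) N u
  have hE : exp (I * (N + 1) * (x - y)) = exp (I * (N + 1) * x) * conj (exp (I * (N + 1) * y)) := by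
    rw [conj_exp_I_mul_mul (by simp), ← exp_add]
    ring_nf
  calc _ = trigPoly a N x * conj (trigPoly a N y) - trigPoly b N x * conj (trigPoly b N y)
        + trigPoly (fun k => conj (a (N + 1 - k))) N x * conj (trigPoly (fun k => conj (a (N + 1 - k))) N y)
        - trigPoly (fun k => a (k - (N + 1))) N x * conj (trigPoly (fun k => a (k - (N + 1))) N y) := by
          rw [hs₀, ht₀, ht₀, hE, ← hr x, ← hr y, ← hu x, ← hu y]
          simp only [map_mul, conj_conj]
          ring
    _ = 0 := by
          simp only [trigPoly_mul_conj_trigPoly, ← sum_sub_distrib, ← sum_add_distrib]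
          refine sum_eq_zero fun j hj => sum_eq_zero fun k hk => ?_
          rw [mem_Icc] at hj hk
          have key := toeplitz_normal_coeff_identity hnormal hj.1 (by omega) hk.1 (by omega)
          push_cast [← starRingEnd_apply] at key
          simp only [b, conj_conj]
          linear_combination (exp (I * j * x) * exp (-(I * k * y))) * key

theorem normal_toeplitz_trig_identity (N : ℕ) (hN : 1 ≤ N) (a : ℤ → ℂ)
    (s t : ℝ → ℂ)
    (hs : ∀ x : ℝ, s x = ∑ k ∈ Finset.Icc 1 N, a (k : ℤ) * Complex.exp (Complex.I * (k : ℂ) * (x : ℂ)))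
    (ht : ∀ x : ℝ, t x = ∑ k ∈ Finset.Icc 1 N, a (-(k : ℤ)) * Complex.exp (-(Complex.I * (k : ℂ) * (x : ℂ))))
    (T : Matrix (Fin (N + 1)) (Fin (N + 1)) ℂ)
    (hT : ∀ j k : Fin (N + 1), T j k = a ((j : ℤ) - (k : ℤ)))
    (hnormal : T * Tᴴ = Tᴴ * T) :
    ∀ x y : ℝ,
      s x * (starRingEnd ℂ) (s y) - (starRingEnd ℂ) (t x) * t y
        + (starRingEnd ℂ) (s x) * s y * Complex.exp (Complex.I * ((N : ℂ) + 1) * ((x : ℂ) - (y : ℂ)))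
        - t x * (starRingEnd ℂ) (t y) * Complex.exp (Complex.I * ((N : ℂ) + 1) * ((x : ℂ) - (y : ℂ))) = 0 :=
  normal_toeplitz_trig_identity_general N a s t hs ht T hT hnormal
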